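/- Let u ∈ ℂ((z)) be a formal Laurent series with a pole of order exactly 1 at 0, i.e., the coefficient of z⁻¹ in u is nonzero and the coefficient of zⁿ is zero for all n ≤ −2. Then for every λ ∈ ℂ, the set of ψ ∈ ℂ((z)) satisfying ψ'' + uψ = λψ does not contain two linearly independent elements. -/

import Mathlib

open HahnSeries

/-- The formal derivative of a formal Laurent series `Σₙ aₙ zⁿ ↦ Σₙ n aₙ z^{n−1}`. -/
noncomputable def laurentDeriv (f : LaurentSeries ℂ) : LaurentSeries ℂ where
  coeff n := ((n + 1 : ℤ) : ℂ) * f.coeff (n + 1)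
  isPWO_support' := by
    refine Set.IsPWO.mono (Set.IsPWO.image_of_monotone f.isPWO_support
      (f := fun m : ℤ => m - 1) (fun a b hab => by simpa using hab)) ?_
    intro n hn
    have h1 : f.coeff (n + 1) ≠ 0 := by
      intro h0
      simp only [Function.mem_support, h0, mul_zero, ne_eq, not_true_eq_false] at hn
    exact ⟨n + 1, h1, by ring⟩

/-!
The point `0` is a regular singular point of `ψ'' + (u - λ) ψ = 0` with indicial equation
`ρ (ρ - 1) = 0`. The exponent `0` is resonant: comparing coefficients of `z⁻¹` forces
`u₋₁ ψ₀ = 0`, so the corresponding solution needs a logarithm. Hence every nonzero Laurent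
solution has order exactly `1`, and the solution space embeds into `ℂ` via the coefficient
of `z`.
-/

theorem Submodule.not_linearIndependent_pair_of_disjoint_ker {K M : Type*} [Field K]
    [AddCommGroup M] [Module K M] {V : Submodule K M} {f : M →ₗ[K] K}
    (hV : Disjoint V (LinearMap.ker f)) {x y : M} (hx : x ∈ V) (hy : y ∈ V) :
    ¬ LinearIndependent K ![x, y] := by
  intro hxy
  have hV' := Submodule.disjoint_def.1 hV
  have hcomb : f y • x - f x • y = 0 :=
    hV' _ (V.sub_mem (V.smul_mem _ hx) (V.smul_mem _ hy)) (by simp [mul_comm])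
  have hfy : f y = 0 := (LinearIndependent.pair_iff.1 hxy (f y) (-f x)
    (by rw [neg_smul, ← sub_eq_add_neg, hcomb])).1
  exact hxy.ne_zero 1 (hV' y hy hfy)

theorem HahnSeries.order_eq_of_coeff_ne_zero_of_forall_lt {Γ R : Type*} [Zero Γ]
    [LinearOrder Γ] [Zero R] {x : HahnSeries Γ R} {n : Γ} (hn : x.coeff n ≠ 0)
    (h : ∀ k < n, x.coeff k = 0) : x.order = n :=
  le_antisymm (order_le_of_coeff_ne_zero hn)
    ((le_order_iff_forall (ne_zero_of_coeff_ne_zero hn)).2 h)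

@[simp]
theorem coeff_laurentDeriv (f : LaurentSeries ℂ) (n : ℤ) :
    (laurentDeriv f).coeff n = ((n : ℂ) + 1) * f.coeff (n + 1) := by
  simp [laurentDeriv]

theorem coeff_laurentDeriv_laurentDeriv (f : LaurentSeries ℂ) (n : ℤ) :
    (laurentDeriv (laurentDeriv f)).coeff n =
      ((n : ℂ) + 1) * ((n : ℂ) + 2) * f.coeff (n + 2) := by
  simp only [coeff_laurentDeriv, Int.cast_add, Int.cast_one, add_assoc, one_add_one_eq_two]
  ring

theorem HahnSeries.mul_smul_comm {Γ R : Type*} [AddCommMonoid Γ] [PartialOrder Γ]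
    [IsOrderedCancelAddMonoid Γ] [CommSemiring R] (c : R) (x y : HahnSeries Γ R) :
    x * (c • y) = c • (x * y) := by
  rw [← C_mul_eq_smul, ← C_mul_eq_smul, mul_left_comm]

noncomputable def schrodingerOp (u : LaurentSeries ℂ) (lam : ℂ) :
    LaurentSeries ℂ →ₗ[ℂ] LaurentSeries ℂ where
  toFun ψ := laurentDeriv (laurentDeriv ψ) + u * ψ - lam • ψ
  map_add' f g := by
    ext n
    simp only [coeff_add, coeff_sub, coeff_smul, smul_eq_mul, mul_add,
      coeff_laurentDeriv_laurentDeriv]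
    ring
  map_smul' c f := by
    ext n
    simp only [coeff_add, coeff_sub, coeff_smul, smul_eq_mul, HahnSeries.mul_smul_comm,
      coeff_laurentDeriv_laurentDeriv, RingHom.id_apply]
    ring

theorem mem_ker_schrodingerOp {u ψ : LaurentSeries ℂ} {lam : ℂ} :
    ψ ∈ LinearMap.ker (schrodingerOp u lam) ↔
      laurentDeriv (laurentDeriv ψ) + u * ψ = lam • ψ := by
  simp [schrodingerOp, sub_eq_zero]

theorem order_eq_one_of_mem_ker_schrodingerOp {u ψ : LaurentSeries ℂ} {lam : ℂ}
    (hu : u.order = -1) (hψ : ψ ∈ LinearMap.ker (schrodingerOp u lam)) (hψ0 : ψ ≠ 0) :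
    ψ.order = 1 := by
  have hu0 : u ≠ 0 := by rintro rfl; simp at hu
  set m := ψ.order
  have hcoeff (n : ℤ) :
      ((n : ℂ) + 1) * ((n : ℂ) + 2) * ψ.coeff (n + 2) + (u * ψ).coeff n = lam * ψ.coeff n := by
    simpa only [coeff_add, coeff_laurentDeriv_laurentDeriv, coeff_smul, smul_eq_mul] using
      congrArg (coeff · n) (mem_ker_schrodingerOp.1 hψ)
  have hord : (u * ψ).order = m - 1 := by rw [order_mul hu0 hψ0, hu]; ring
  have hlead : (u * ψ).coeff (m - 1) = u.leadingCoeff * ψ.leadingCoeff := by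
    simpa [hu, neg_add_eq_sub] using coeff_mul_order_add_order u ψ
  have hindicial : (m : ℂ) * ((m : ℂ) - 1) = 0 := by
    have h := hcoeff (m - 2)
    rw [sub_add_cancel, coeff_eq_zero_of_lt_order (by omega : m - 2 < (u * ψ).order),
      coeff_eq_zero_of_lt_order (by omega : m - 2 < m)] at h
    push_cast at h
    have hψm : ψ.coeff m ≠ 0 := coeff_order_eq_zero.not.2 hψ0
    exact (mul_eq_zero.1 (by linear_combination h)).resolve_right hψm
  rcases mul_eq_zero.1 hindicial with hm | hm
  · have h := hcoeff (m - 1)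
    rw [hlead, coeff_eq_zero_of_lt_order (by omega : m - 1 < m)] at h
    push_cast at h
    rw [hm] at h
    have hlead0 : u.leadingCoeff * ψ.leadingCoeff = 0 := by linear_combination h
    simp [hu0, hψ0] at hlead0
  · exact_mod_cast sub_eq_zero.1 hm

theorem disjoint_ker_schrodingerOp_ker_coeff_one {u : LaurentSeries ℂ} (hu : u.order = -1)
    (lam : ℂ) :
    Disjoint (LinearMap.ker (schrodingerOp u lam))
      (LinearMap.ker (coeff.linearMap (R := ℂ) (V := ℂ) (1 : ℤ))) := by
  refine Submodule.disjoint_def.2 fun ψ hψ hψ1 => ?_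
  by_contra hψ0
  have hord := order_eq_one_of_mem_ker_schrodingerOp hu hψ hψ0
  exact hψ0 (coeff_order_eq_zero.1 (hord ▸ hψ1))

/-- If `u ∈ ℂ((z))` has a pole of order exactly one at `0`, then for no `λ ∈ ℂ` does
the equation `ψ'' + uψ = λψ` admit two linearly independent formal Laurent series
solutions. -/
theorem no_two_independent_solutions_of_first_order_pole
    (u : LaurentSeries ℂ)
    (h1 : u.coeff (-1 : ℤ) ≠ 0) (h2 : ∀ n : ℤ, n ≤ -2 → u.coeff n = 0) :
    ∀ lam : ℂ, ¬ ∃ ψ₁ ψ₂ : LaurentSeries ℂ,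
      laurentDeriv (laurentDeriv ψ₁) + u * ψ₁ = lam • ψ₁ ∧
      laurentDeriv (laurentDeriv ψ₂) + u * ψ₂ = lam • ψ₂ ∧
      LinearIndependent ℂ ![ψ₁, ψ₂] := by
  rintro lam ⟨ψ₁, ψ₂, hψ₁, hψ₂, hind⟩
  have hu : u.order = -1 :=
    order_eq_of_coeff_ne_zero_of_forall_lt h1 fun k hk => h2 k (by omega)
  exact Submodule.not_linearIndependent_pair_of_disjoint_ker
    (disjoint_ker_schrodingerOp_ker_coeff_one hu lam) (mem_ker_schrodingerOp.2 hψ₁)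
    (mem_ker_schrodingerOp.2 hψ₂) hind
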